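/- arXiv:alg-geom/9711012 — 3 statements merged into one kernel-verified Lean document; each statement's English description precedes it below -/
import Mathlib

section
/- For an abelian surface A with an ample line bundle L of type (1,n) on which there are no elliptic curves, the intermediate lattice count in the genus-2 curve enumeration reduces to the following: the number of sublattices Λ of Γ = ℤ⁴ of index n satisfying a(Λ,Λ) ⊆ nℤ, where a is the alternating form with a(x₁,y₁)=1, a(x₂,y₂)=n, a(x₁,x₂)=a(y₁,y₂)=a(x₁,y₂)=a(x₂,y₁)=0 in a symplectic basis x₁,x₂,y₁,y₂, equals σ₁(n). Concretely: the sublattices Λ ⊆ ℤ² × ℤ² of index n with a(Λ,Λ) ⊆ nℤ are exactly those of the form Λ' × ℤ², where Λ' ⊆ ℤ² has index n, and their number is σ₁(n). -/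
/-- The alternating form `a` on `Γ = ℤ² × ℤ²` (with symplectic basis `x₁, y₁, x₂, y₂`,
`a(x₁,y₁) = 1`, `a(x₂,y₂) = n`, all other pairings zero). -/
def symplecticFormA (n : ℕ) (v w : (ℤ × ℤ) × (ℤ × ℤ)) : ℤ :=
  (v.1.1 * w.1.2 - w.1.1 * v.1.2) + (n : ℤ) * (v.2.1 * w.2.2 - w.2.1 * v.2.2)

/-!
Projecting `Γ = ℤ² × ℤ²` onto its first factor turns `n ∣ a(Λ, Λ)` into `n ∣ det(π₁Λ, π₁Λ)`,
since the second summand of `a` is a multiple of `n`. For a finite-index `P ≤ ℤ²` the values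
`det(u, w)`, `u, w ∈ P`, generate the ideal `[ℤ² : P] ℤ`, as one reads off a Hermite basis
`(a, 0), (b, d)` of `P`. Hence `Λ ≤ π₁Λ × ℤ²` with `[ℤ² : π₁Λ] ∣ n ∣ [ℤ² : π₁Λ]`, which forces
`Λ = π₁Λ × ℤ²`. The Hermite normal forms with `a d = n`, `0 ≤ b < a` parametrise the sublattices
of index `n` of `ℤ²`, and there are `∑_{a ∣ n} a` of them.
-/

open AddSubgroup

theorem AddSubgroup.eq_of_le_of_index_eq {G : Type*} [AddGroup G] {H K : AddSubgroup G}
    (hle : H ≤ K) (h : H.index = K.index) (h0 : H.index ≠ 0) : H = K := by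
  have hrel := relIndex_mul_index hle
  rw [h] at hrel h0
  exact le_antisymm hle (relIndex_eq_one.mp ((mul_eq_right₀ h0).mp hrel))

theorem AddSubgroup.prod_top_injective {G N : Type*} [AddGroup G] [AddGroup N] :
    Function.Injective fun H : AddSubgroup G => H.prod (⊤ : AddSubgroup N) :=
  fun _ _ h => comap_injective Prod.fst_surjective (by simpa only [prod_top] using h)

theorem Int.exists_eq_zmultiples_natCast (H : AddSubgroup ℤ) : ∃ a : ℕ, H = zmultiples (a : ℤ) := by
  obtain ⟨a, rfl⟩ := Int.subgroup_cyclic H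
  exact ⟨a.natAbs, by rw [Int.zmultiples_natAbs, zmultiples_eq_closure]⟩

namespace ZSquared

def det (u w : ℤ × ℤ) : ℤ := u.1 * w.2 - w.1 * u.2

def shearScale (d : ℕ) (b : ℤ) : ℤ × ℤ →+ ℤ × ℤ where
  toFun u := (u.1 + b * u.2, d * u.2)
  map_zero' := by simp
  map_add' u v := by ext <;> simp only [Prod.fst_add, Prod.snd_add] <;> ring

theorem shearScale_injective {d : ℕ} (hd : d ≠ 0) (b : ℤ) :
    Function.Injective (shearScale d b) := by
  rw [injective_iff_map_eq_zero]
  rintro ⟨x, k⟩ h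
  obtain ⟨hx, rfl⟩ : x + b * k = 0 ∧ k = 0 := by simpa [shearScale, hd] using h
  simpa using hx

theorem range_shearScale (d : ℕ) (b : ℤ) :
    (shearScale d b).range = (⊤ : AddSubgroup ℤ).prod (zmultiples (d : ℤ)) := by
  ext ⟨y, z⟩
  simp only [AddMonoidHom.mem_range, mem_prod, mem_top, Int.mem_zmultiples_iff, true_and]
  constructor
  · rintro ⟨u, hu⟩
    exact ⟨u.2, (congrArg Prod.snd hu).symm⟩
  · rintro ⟨k, rfl⟩
    exact ⟨(y - b * k, k), by simp [shearScale]⟩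

/-- The lattice with basis `(a, 0), (b, d)`; for `0 ≤ b < a` this is its Hermite normal form. -/
def hermite (a d : ℕ) (b : ℤ) : AddSubgroup (ℤ × ℤ) :=
  ((zmultiples (a : ℤ)).prod ⊤).map (shearScale d b)

theorem mem_hermite {a d : ℕ} {b : ℤ} {u : ℤ × ℤ} :
    u ∈ hermite a d b ↔ ∃ j k : ℤ, u = (a * j + b * k, d * k) := by
  simp only [hermite, mem_map, mem_prod, Int.mem_zmultiples_iff, mem_top, and_true]
  constructor
  · rintro ⟨⟨x, k⟩, ⟨j, rfl⟩, rfl⟩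
    exact ⟨j, k, rfl⟩
  · rintro ⟨j, k, rfl⟩
    exact ⟨(a * j, k), ⟨j, rfl⟩, rfl⟩

theorem index_hermite (a : ℕ) {d : ℕ} (hd : d ≠ 0) (b : ℤ) :
    (hermite a d b).index = a * d := by
  rw [hermite, index_map_of_injective _ (shearScale_injective hd b), range_shearScale,
    index_prod, index_prod, index_top, Int.index_zmultiples, Int.index_zmultiples]
  simp

theorem mul_dvd_det_of_mem_hermite {a d : ℕ} {b : ℤ} {u w : ℤ × ℤ}
    (hu : u ∈ hermite a d b) (hw : w ∈ hermite a d b) : (a * d : ℤ) ∣ det u w := by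
  obtain ⟨j, k, rfl⟩ := mem_hermite.mp hu
  obtain ⟨j', k', rfl⟩ := mem_hermite.mp hw
  exact ⟨j * k' - j' * k, by simp only [det]; ring⟩

theorem fst_basis_mem_hermite (a d : ℕ) (b : ℤ) : ((a : ℤ), 0) ∈ hermite a d b :=
  mem_hermite.mpr ⟨1, 0, by simp⟩

theorem snd_basis_mem_hermite (a d : ℕ) (b : ℤ) : (b, (d : ℤ)) ∈ hermite a d b :=
  mem_hermite.mpr ⟨0, 1, by simp⟩

theorem comap_inl_hermite (a : ℕ) {d : ℕ} (hd : d ≠ 0) (b : ℤ) :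
    (hermite a d b).comap (AddMonoidHom.inl ℤ ℤ) = zmultiples (a : ℤ) := by
  ext x
  simp only [mem_comap, AddMonoidHom.inl_apply, mem_hermite, Prod.mk.injEq,
    Int.mem_zmultiples_iff]
  constructor
  · rintro ⟨j, k, hx, hk⟩
    obtain rfl : k = 0 := by simpa [hd] using hk.symm
    exact ⟨j, by simpa using hx⟩
  · rintro ⟨j, rfl⟩
    exact ⟨j, 0, by simp, by simp⟩

theorem map_snd_hermite (a d : ℕ) (b : ℤ) :
    (hermite a d b).map (AddMonoidHom.snd ℤ ℤ) = zmultiples (d : ℤ) := by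
  ext y
  simp only [mem_map, AddMonoidHom.coe_snd, mem_hermite, Int.mem_zmultiples_iff]
  constructor
  · rintro ⟨u, ⟨j, k, rfl⟩, rfl⟩
    exact ⟨k, rfl⟩
  · rintro ⟨k, rfl⟩
    exact ⟨_, ⟨0, k, rfl⟩, rfl⟩

theorem hermite_injective {a d a' d' : ℕ} {b b' : ℤ} (hd : d ≠ 0) (hb : 0 ≤ b) (hba : b < a)
    (hb' : 0 ≤ b') (hba' : b' < a') (h : hermite a d b = hermite a' d' b') :
    a = a' ∧ d = d' ∧ b = b' := by
  have hdd' : d = d' := by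
    simpa [map_snd_hermite] using congrArg (fun H => (H.map (AddMonoidHom.snd ℤ ℤ)).index) h
  subst hdd'
  have haa' : a = a' := by
    simpa [comap_inl_hermite _ hd] using
      congrArg (fun H => (H.comap (AddMonoidHom.inl ℤ ℤ)).index) h
  subst haa'
  obtain ⟨j, k, hbk⟩ := mem_hermite.mp (h ▸ snd_basis_mem_hermite a d b)
  obtain ⟨hbj, hk⟩ := Prod.mk.inj hbk
  obtain rfl : k = 1 := by simpa [hd] using hk
  refine ⟨rfl, rfl, ?_⟩
  rw [← Int.emod_eq_of_lt hb hba, ← Int.emod_eq_of_lt hb' hba', hbj, mul_one,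
    Int.mul_add_emod_self_left]

theorem eq_hermite_of_mem {H : AddSubgroup (ℤ × ℤ)} {a d : ℕ} {b : ℤ}
    (ha : H.comap (AddMonoidHom.inl ℤ ℤ) = zmultiples (a : ℤ))
    (hd : H.map (AddMonoidHom.snd ℤ ℤ) = zmultiples (d : ℤ)) (hb : (b, (d : ℤ)) ∈ H) :
    H = hermite a d b := by
  have haH : ((a : ℤ), (0 : ℤ)) ∈ H :=
    show (a : ℤ) ∈ H.comap (AddMonoidHom.inl ℤ ℤ) from ha ▸ mem_zmultiples _
  ext u
  rw [mem_hermite]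
  constructor
  · intro hu
    obtain ⟨k, hk : u.2 = d * k⟩ := Int.mem_zmultiples_iff.mp (hd ▸ mem_map_of_mem _ hu)
    have hrow : u.1 - b * k ∈ H.comap (AddMonoidHom.inl ℤ ℤ) := by
      show (u.1 - b * k, 0) ∈ H
      convert sub_mem hu (zsmul_mem hb k) using 1
      ext <;> simp [hk, mul_comm]
    obtain ⟨j, hj⟩ := Int.mem_zmultiples_iff.mp (ha ▸ hrow)
    exact ⟨j, k, Prod.ext (by linarith) hk⟩
  · rintro ⟨j, k, rfl⟩
    convert add_mem (zsmul_mem haH j) (zsmul_mem hb k) using 1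
    ext <;> simp [mul_comm]

theorem exists_eq_hermite {H : AddSubgroup (ℤ × ℤ)} (hH : H.index ≠ 0) :
    ∃ a d : ℕ, ∃ b : ℤ, 0 < d ∧ 0 ≤ b ∧ b < a ∧ H = hermite a d b := by
  obtain ⟨a, ha⟩ := Int.exists_eq_zmultiples_natCast (H.comap (AddMonoidHom.inl ℤ ℤ))
  obtain ⟨d, hd⟩ := Int.exists_eq_zmultiples_natCast (H.map (AddMonoidHom.snd ℤ ℤ))
  have ha0 : a ≠ 0 := by
    have hidx := index_comap H (AddMonoidHom.inl ℤ ℤ)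
    rw [ha, Int.index_zmultiples, Int.natAbs_natCast] at hidx
    exact ne_zero_of_dvd_ne_zero hH (hidx ▸ relIndex_dvd_index_of_normal _ _)
  have hd0 : d ≠ 0 := by
    have : d ∣ H.index := by
      simpa [hd] using index_map_dvd H (f := AddMonoidHom.snd ℤ ℤ) Prod.snd_surjective
    exact ne_zero_of_dvd_ne_zero hH this
  obtain ⟨⟨b₀, y⟩, hb₀, hy⟩ : (d : ℤ) ∈ H.map (AddMonoidHom.snd ℤ ℤ) := hd ▸ mem_zmultiples _
  obtain rfl : y = d := hy
  have haH : ((a : ℤ), (0 : ℤ)) ∈ H :=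
    show (a : ℤ) ∈ H.comap (AddMonoidHom.inl ℤ ℤ) from ha ▸ mem_zmultiples _
  have hb : (b₀ % a, (d : ℤ)) ∈ H := by
    convert sub_mem hb₀ (zsmul_mem haH (b₀ / a)) using 1
    ext <;> simp [Int.emod_def, mul_comm]
  have ha' : (0 : ℤ) < a := by exact_mod_cast Nat.pos_of_ne_zero ha0
  exact ⟨a, d, b₀ % a, Nat.pos_of_ne_zero hd0, Int.emod_nonneg _ ha'.ne',
    Int.emod_lt_of_pos _ ha', eq_hermite_of_mem ha hd hb⟩

theorem card_index_eq_sum_divisors {n : ℕ} (hn : n ≠ 0) :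
    Nat.card {H : AddSubgroup (ℤ × ℤ) // H.index = n} = ∑ a ∈ n.divisors, a := by
  have hquot {a : ℕ} (ha : a ∈ n.divisors) : n / a ≠ 0 :=
    (Nat.div_pos (Nat.divisor_le ha) (Nat.pos_of_mem_divisors ha)).ne'
  let f : (Σ a : n.divisors, Fin a) → {H : AddSubgroup (ℤ × ℤ) // H.index = n} := fun p =>
    ⟨hermite p.1 (n / p.1) p.2, by
      rw [index_hermite _ (hquot p.1.2), Nat.mul_div_cancel' (Nat.dvd_of_mem_divisors p.1.2)]⟩
  have hf : Function.Bijective f := by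
    constructor
    · rintro ⟨⟨a, ha⟩, b⟩ ⟨⟨a', ha'⟩, b'⟩ hab
      obtain ⟨rfl, -, hbb'⟩ := hermite_injective (hquot ha) (Int.natCast_nonneg b)
        (by exact_mod_cast b.2) (Int.natCast_nonneg b') (by exact_mod_cast b'.2)
        (congrArg Subtype.val hab)
      obtain rfl : b = b' := Fin.ext (by exact_mod_cast hbb')
      rfl
    · rintro ⟨H, hH⟩
      obtain ⟨a, d, b, hd, hb, hba, rfl⟩ := exists_eq_hermite (hH ▸ hn)
      rw [index_hermite a hd.ne' b] at hH
      have ha : a ∈ n.divisors := Nat.mem_divisors.mpr ⟨⟨d, hH.symm⟩, hn⟩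
      refine ⟨⟨⟨a, ha⟩, ⟨b.toNat, show b.toNat < a by omega⟩⟩, Subtype.ext ?_⟩
      simp [f, ← hH, Nat.mul_div_cancel_left d (Nat.pos_of_mem_divisors ha),
        Int.toNat_of_nonneg hb]
  rw [← Nat.card_congr (Equiv.ofBijective f hf), Nat.card_sigma]
  simp only [Nat.card_eq_fintype_card, Fintype.card_fin]
  exact Finset.sum_coe_sort n.divisors id

theorem dvd_index_iff_forall_dvd_det {H : AddSubgroup (ℤ × ℤ)} (hH : H.index ≠ 0) (m : ℤ) :
    m ∣ H.index ↔ ∀ u ∈ H, ∀ w ∈ H, m ∣ det u w := by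
  obtain ⟨a, d, b, hd, -, -, rfl⟩ := exists_eq_hermite hH
  have hdet : det (a, 0) (b, d) = a * d := by simp [det]
  rw [index_hermite a hd.ne' b]
  push_cast
  exact ⟨fun hm u hu w hw => hm.trans (mul_dvd_det_of_mem_hermite hu hw),
    fun h => hdet ▸ h _ (fst_basis_mem_hermite a d b) _ (snd_basis_mem_hermite a d b)⟩

end ZSquared

open ZSquared

theorem dvd_symplecticFormA_iff (n : ℕ) (v w : (ℤ × ℤ) × (ℤ × ℤ)) :
    (n : ℤ) ∣ symplecticFormA n v w ↔ (n : ℤ) ∣ det v.1 w.1 :=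
  dvd_add_left (dvd_mul_right _ _)

theorem forall_dvd_symplecticFormA_iff (n : ℕ) (Λ : AddSubgroup ((ℤ × ℤ) × (ℤ × ℤ))) :
    (∀ v ∈ Λ, ∀ w ∈ Λ, (n : ℤ) ∣ symplecticFormA n v w) ↔
      ∀ u ∈ Λ.map (AddMonoidHom.fst _ _), ∀ w ∈ Λ.map (AddMonoidHom.fst _ _),
        (n : ℤ) ∣ det u w := by
  simp only [mem_map, AddMonoidHom.coe_fst, forall_exists_index, and_imp,
    forall_apply_eq_imp_iff₂, dvd_symplecticFormA_iff]

theorem index_eq_and_isotropic_iff {n : ℕ} (hn : 0 < n) (Λ : AddSubgroup ((ℤ × ℤ) × (ℤ × ℤ))) :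
    (Λ.index = n ∧ ∀ v ∈ Λ, ∀ w ∈ Λ, (n : ℤ) ∣ symplecticFormA n v w) ↔
      ∃ Λ' : AddSubgroup (ℤ × ℤ), Λ'.index = n ∧ Λ = Λ'.prod ⊤ := by
  set π := AddMonoidHom.fst (ℤ × ℤ) (ℤ × ℤ)
  have hπ : Function.Surjective π := Prod.fst_surjective
  simp only [prod_top, forall_dvd_symplecticFormA_iff]
  constructor
  · rintro ⟨hΛ, hdet⟩
    set P := Λ.map π
    have hle : Λ ≤ P.comap π := le_comap_map _ _
    have hPidx : (P.comap π).index = P.index := index_comap_of_surjective _ hπ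
    have hPn : P.index ∣ n := hΛ ▸ hPidx ▸ index_dvd_of_le hle
    have hnP : n ∣ P.index := by
      exact_mod_cast (dvd_index_iff_forall_dvd_det (ne_zero_of_dvd_ne_zero hn.ne' hPn) n).mpr hdet
    have hP : P.index = n := Nat.dvd_antisymm hPn hnP
    exact ⟨P, hP, eq_of_le_of_index_eq hle (by rw [hPidx, hP, hΛ]) (hΛ ▸ hn.ne')⟩
  · rintro ⟨Λ', hΛ', rfl⟩
    rw [index_comap_of_surjective _ hπ, map_comap_eq_self_of_surjective hπ]
    exact ⟨hΛ', (dvd_index_iff_forall_dvd_det (hΛ' ▸ hn.ne') n).mp (by rw [hΛ'])⟩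

/-- The sublattices `Λ ⊆ ℤ² × ℤ²` of index `n` with `a(Λ,Λ) ⊆ nℤ` are exactly those of
the form `Λ' × ℤ²` with `Λ' ⊆ ℤ²` of index `n`, and their number is `σ₁(n)`. -/
theorem count_isotropic_sublattices (n : ℕ) (hn : 0 < n) :
    (∀ Λ : AddSubgroup ((ℤ × ℤ) × (ℤ × ℤ)),
      (Λ.index = n ∧ ∀ v ∈ Λ, ∀ w ∈ Λ, (n : ℤ) ∣ symplecticFormA n v w) ↔
      (∃ Λ' : AddSubgroup (ℤ × ℤ), Λ'.index = n ∧ Λ = Λ'.prod ⊤)) ∧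
    Nat.card {Λ : AddSubgroup ((ℤ × ℤ) × (ℤ × ℤ)) //
        Λ.index = n ∧ ∀ v ∈ Λ, ∀ w ∈ Λ, (n : ℤ) ∣ symplecticFormA n v w} =
      ∑ d ∈ n.divisors, d := by
  refine ⟨index_eq_and_isotropic_iff hn, ?_⟩
  rw [← card_index_eq_sum_divisors hn.ne']
  refine Nat.card_congr ((Equiv.subtypeEquivRight fun Λ => ?_).trans
    (Equiv.Set.image _ {Λ' | Λ'.index = n} prod_top_injective).symm)
  exact (index_eq_and_isotropic_iff hn Λ).trans (exists_congr fun _ => and_congr_right' eq_comm)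
end

section
/- If f(q) and g(q) are formal power series over a commutative ring (ℚ, say) with g(q) having zero constant term and invertible linear coefficient, then for every k ≥ 0 the coefficient of g(q)^k in the expansion of f(q) as a power series in g(q) equals the coefficient of q⁰ in the Laurent series f(q)·(q·g'(q))/g(q)^{k+1}. -/
/-!
Write `g = X * u` with `u` a unit. Then `f · Dg / g^(k+1) = f · g' · u⁻¹^(k+1) · X^(-k)`, so its
`X⁰`-coefficient is `[X^k] f g' u⁻¹^(k+1)`, which only sees `f` modulo `X^(k+1)`, i.e. the partial
sum `∑_{j ≤ k} c_j g^j`. The `j`-th term contributes `c_j [X^m] g' u⁻¹^(m+1)` with `m = k - j`,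
and this is `δ_{m,0}`: for `m > 0`, `g' u⁻¹^(m+1) = u⁻¹^m - X (u⁻¹^m)' / m`, and `X d/dX`
multiplies the coefficient of `X^m` by `m`.
-/

open PowerSeries

theorem PowerSeries.mk_natCast_mul_coeff_eq_X_mul_derivative {R : Type*} [CommSemiring R]
    (f : R⟦X⟧) :
    (mk fun n => (n : R) * coeff n f) = X * d⁄dX R f := by
  ext (_ | n)
  · simp
  · rw [coeff_succ_X_mul, coeff_derivative, coeff_mk]
    push_cast
    ring

theorem PowerSeries.derivative_X_mul {R : Type*} [CommSemiring R] (u : R⟦X⟧) :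
    d⁄dX R (X * u) = u + X * d⁄dX R u := by
  simp [Derivation.leibniz, mul_comm]

theorem PowerSeries.X_pow_dvd_sub_sum_C_mul_pow {R : Type*} [CommRing R] {f g : R⟦X⟧}
    (hg : constantCoeff g = 0) {c : ℕ → R}
    (hrep : ∀ N, coeff N f = coeff N (∑ k ∈ Finset.range (N + 1), C (c k) * g ^ k)) (n : ℕ) :
    X ^ n ∣ f - ∑ k ∈ Finset.range n, C (c k) * g ^ k := by
  obtain ⟨u, rfl⟩ := X_dvd_iff.mpr hg
  rw [X_pow_dvd_iff]
  intro m hm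
  have hhigh : ∀ k ∈ Finset.range n, k ∉ Finset.range (m + 1) →
      coeff m (C (c k) * (X * u) ^ k) = 0 := by
    intro k _ hk
    rw [mul_pow, mul_left_comm, coeff_X_pow_mul', if_neg (by simpa using hk)]
  rw [map_sub, hrep m, sub_eq_zero, eq_comm, map_sum, map_sum,
    Finset.sum_subset (Finset.range_subset_range.mpr hm) hhigh]

section Field

variable {K : Type*} [Field K]

theorem PowerSeries.coeff_derivative_X_mul_mul_inv_pow [CharZero K] {u : K⟦X⟧}
    (hu : constantCoeff u ≠ 0) (m : ℕ) :
    coeff m (d⁄dX K (X * u) * u⁻¹ ^ (m + 1)) = if m = 0 then 1 else 0 := by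
  have hinv : u * u⁻¹ = 1 := PowerSeries.mul_inv_cancel u hu
  rcases m with _ | n
  · simp [constantCoeff_inv, hu]
  set v := u⁻¹
  have hsplit : d⁄dX K (X * u) * v ^ (n + 2) = v ^ (n + 1) + X * (d⁄dX K u * v ^ (n + 2)) := by
    rw [derivative_X_mul]
    linear_combination v ^ (n + 1) * hinv
  have hpow : d⁄dX K (v ^ (n + 1)) = C (-(n + 1 : K)) * (d⁄dX K u * v ^ (n + 2)) := by
    rw [derivative_pow, derivative_inv', Nat.add_sub_cancel, map_neg, ← map_natCast (C (R := K))]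
    push_cast
    ring
  have hcoeff := coeff_derivative (v ^ (n + 1)) n
  rw [hpow, coeff_C_mul] at hcoeff
  have hn : (n + 1 : K) ≠ 0 := Nat.cast_add_one_ne_zero n
  rw [if_neg n.succ_ne_zero, hsplit, map_add, coeff_succ_X_mul]
  refine mul_left_cancel₀ hn ?_
  linear_combination -hcoeff

theorem PowerSeries.coeff_X_mul_pow_mul_derivative_mul_inv_pow [CharZero K] {u : K⟦X⟧}
    (hu : constantCoeff u ≠ 0) {j k : ℕ} (hjk : j ≤ k) :
    coeff k ((X * u) ^ j * d⁄dX K (X * u) * u⁻¹ ^ (k + 1)) = if j = k then 1 else 0 := by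
  obtain ⟨m, rfl⟩ := Nat.exists_eq_add_of_le hjk
  have hcancel : (u * u⁻¹) ^ j = 1 := by rw [PowerSeries.mul_inv_cancel u hu, one_pow]
  have hfactor : (X * u) ^ j * d⁄dX K (X * u) * u⁻¹ ^ (j + m + 1)
      = X ^ j * (d⁄dX K (X * u) * u⁻¹ ^ (m + 1)) := by
    linear_combination X ^ j * d⁄dX K (X * u) * u⁻¹ ^ (m + 1) * hcancel
  rw [hfactor, add_comm j m, coeff_X_pow_mul, coeff_derivative_X_mul_mul_inv_pow hu]
  simp

theorem PowerSeries.coeff_sum_C_mul_X_mul_pow_mul_derivative_mul_inv_pow [CharZero K]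
    {u : K⟦X⟧} (hu : constantCoeff u ≠ 0) (c : ℕ → K) (k : ℕ) :
    coeff k ((∑ j ∈ Finset.range (k + 1), C (c j) * (X * u) ^ j) * d⁄dX K (X * u) *
      u⁻¹ ^ (k + 1)) = c k := by
  simp_rw [Finset.sum_mul, map_sum, mul_assoc, coeff_C_mul, ← mul_assoc]
  rw [Finset.sum_eq_single_of_mem k (Finset.self_mem_range_succ k)]
  · rw [coeff_X_mul_pow_mul_derivative_mul_inv_pow hu le_rfl, if_pos rfl, mul_one]
  · intro j hj hjk
    rw [coeff_X_mul_pow_mul_derivative_mul_inv_pow hu (Finset.mem_range_succ_iff.mp hj),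
      if_neg hjk, mul_zero]

theorem LaurentSeries.coeff_zero_ofPowerSeries_div_X_mul_pow (F : K⟦X⟧) {u : K⟦X⟧}
    (hu : constantCoeff u ≠ 0) (n : ℕ) :
    ((HahnSeries.ofPowerSeries ℤ K F : LaurentSeries K) /
        HahnSeries.ofPowerSeries ℤ K (X * u) ^ n).coeff 0 = coeff n (F * u⁻¹ ^ n) := by
  have hF : F = F * u⁻¹ ^ n * u ^ n := by
    rw [mul_assoc, ← mul_pow, mul_comm u⁻¹, PowerSeries.mul_inv_cancel u hu, one_pow, mul_one]
  have hu' : HahnSeries.ofPowerSeries ℤ K (u ^ n) ≠ 0 :=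
    (map_ne_zero_iff _ HahnSeries.ofPowerSeries_injective).mpr
      (pow_ne_zero n fun h => hu (by simp [h]))
  rw [← map_pow, mul_pow, map_mul, HahnSeries.ofPowerSeries_X_pow, hF, map_mul,
    mul_div_mul_right _ _ hu', div_eq_mul_inv, HahnSeries.inv_single,
    show (0 : ℤ) = n + -n by ring, HahnSeries.coeff_mul_single_add,
    HahnSeries.ofPowerSeries_apply_coeff, inv_one, mul_one, ← hF]

end Field

/-- If `g ∈ ℚ[[q]]` has zero constant term and invertible linear coefficient, and
`f = ∑_k c_k g^k`, then `c_k` is the `q⁰`-coefficient of the formal Laurent series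
`f·Dg/g^{k+1}`, where `D = q d/dq`. -/
theorem coeff_in_g_expansion_eq_residue (f g : PowerSeries ℚ) (c : ℕ → ℚ)
    (h0 : PowerSeries.constantCoeff g = 0)
    (h1 : PowerSeries.coeff 1 g ≠ 0)
    (hrep : ∀ N : ℕ, PowerSeries.coeff N f =
      PowerSeries.coeff N (∑ k ∈ Finset.range (N + 1), PowerSeries.C (c k) * g ^ k))
    (k : ℕ) :
    c k = ((HahnSeries.ofPowerSeries ℤ ℚ
            (f * PowerSeries.mk fun n => (n : ℚ) * PowerSeries.coeff n g) :
            LaurentSeries ℚ) /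
          (HahnSeries.ofPowerSeries ℤ ℚ g : LaurentSeries ℚ) ^ (k + 1)).coeff 0 := by
  obtain ⟨r, hr⟩ := X_pow_dvd_sub_sum_C_mul_pow h0 hrep (k + 1)
  obtain ⟨u, rfl⟩ := X_dvd_iff.mpr h0
  have hu : constantCoeff u ≠ 0 := by simpa [← coeff_zero_eq_constantCoeff] using h1
  set S := ∑ j ∈ Finset.range (k + 1), C (c j) * (X * u) ^ j
  set v := u⁻¹
  rw [LaurentSeries.coeff_zero_ofPowerSeries_div_X_mul_pow _ hu,
    mk_natCast_mul_coeff_eq_X_mul_derivative, eq_add_of_sub_eq' hr]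
  calc c k = coeff k (S * d⁄dX ℚ (X * u) * v ^ (k + 1)) :=
        (coeff_sum_C_mul_X_mul_pow_mul_derivative_mul_inv_pow hu c k).symm
    _ = coeff (k + 1) ((S + X ^ (k + 1) * r) * (X * d⁄dX ℚ (X * u)) * v ^ (k + 1)) := by
      rw [show (S + X ^ (k + 1) * r) * (X * d⁄dX ℚ (X * u)) * v ^ (k + 1)
          = X * (S * d⁄dX ℚ (X * u) * v ^ (k + 1)) +
            X ^ (k + 2) * (r * d⁄dX ℚ (X * u) * v ^ (k + 1)) by ring,
        map_add, coeff_succ_X_mul, coeff_X_pow_mul', if_neg (by omega), add_zero]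
end

section
/- Suppose for every smooth projective surface S and sufficiently ample line bundle L the generating function T(S,L) = ∑_δ t_δ(S,L) x^δ satisfies the multiplicativity property T(S₁ ⊔ S₂, L₁ ⊔ L₂) = T(S₁,L₁)·T(S₂,L₂), and each t_δ is a universal polynomial of degree δ in (L², L·K_S, K_S², c₂(S)). Then there exist four universal power series A₁, A₂, A₃, A₄ ∈ ℚ[[x]] such that T(S,L) = exp(L²·A₁ + L·K_S·A₂ + K_S²·A₃ + c₂(S)·A₄). Abstractly: if φ : ℚ⁴ → ℚ[[x]] is a map such that φ(v) has constant term 1 for all v, φ(v+w) = φ(v)·φ(w) whenever v, w, v+w lie in a Zariski-dense subset closed under addition spanning ℚ⁴, and each coefficient of φ(v) is a polynomial function of v, then each coefficient of log φ(v) is a linear function of v, i.e. φ(v) = exp(v₁A₁ + v₂A₂ + v₃A₃ + v₄A₄) for fixed power series A_i. -/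
/-- The exponential of a power series with zero constant term, defined coefficientwise
by truncation: `exp(f) = ∑_k f^k/k!`. -/
noncomputable def expPS (f : PowerSeries ℚ) : PowerSeries ℚ :=
  PowerSeries.mk fun n =>
    PowerSeries.coeff n (∑ k ∈ Finset.range (n + 1), (k.factorial : ℚ)⁻¹ • f ^ k)

/-!
Polynomiality of the coefficients upgrades multiplicativity on `S` to multiplicativity
everywhere: a basis of `ℚ⁴` can be drawn from `S`, all its combinations with positive integer
coefficients lie in `S`, and a polynomial vanishing on that infinite grid vanishes. Since
`expPS` is a bijection from `x·ℚ[[x]]` onto `1 + x·ℚ[[x]]` turning sums into products (all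
read off from the differential equation `E' = f'·E`), the logarithm of `φ` is then additive,
hence `ℚ`-linear.
-/

open PowerSeries

theorem AddSubsemigroup.nsmul_mem {M : Type*} [AddMonoid M] (T : AddSubsemigroup M) {x : M}
    (hx : x ∈ T) {n : ℕ} (hn : n ≠ 0) : n • x ∈ T := by
  obtain ⟨n, rfl⟩ := Nat.exists_eq_succ_of_ne_zero hn
  induction n with
  | zero => rwa [one_nsmul]
  | succ n ih => rw [succ_nsmul]; exact T.add_mem (ih n.succ_ne_zero) hx

theorem AddSubsemigroup.sum_nsmul_mem {M ι : Type*} [AddCommMonoid M] (T : AddSubsemigroup M)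
    {s : Finset ι} (hs : s.Nonempty) {b : ι → M} (hb : ∀ i ∈ s, b i ∈ T) {n : ι → ℕ}
    (hn : ∀ i ∈ s, n i ≠ 0) : ∑ i ∈ s, n i • b i ∈ T :=
  Finset.sum_induction_nonempty _ (· ∈ T) (fun _ _ => T.add_mem) hs
    fun i hi => T.nsmul_mem (hb i hi) (hn i hi)

theorem Module.Basis.exists_basis_mem_of_span_eq_top {ι K V : Type*} [DivisionRing K]
    [AddCommGroup V] [Module K V] (B : Module.Basis ι K V) {s : Set V}
    (hs : Submodule.span K s = ⊤) : ∃ b : Module.Basis ι K V, ∀ i, b i ∈ s := by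
  let b₀ := Module.Basis.ofSpan hs.ge
  refine ⟨b₀.reindex (b₀.indexEquiv B), fun i => Module.Basis.ofSpan_subset hs.ge ?_⟩
  rw [Module.Basis.reindex_apply]
  exact Set.mem_range_self _

section PolynomialFunctions

open MvPolynomial

variable {ι σ K : Type*}

noncomputable def mvPolynomialFunctions (ι K : Type*) [CommSemiring K] :
    Subalgebra K ((ι → K) → K) :=
  (AlgHom.pi fun v : ι → K => aeval v).range

variable [CommSemiring K]

theorem mem_mvPolynomialFunctions {f : (ι → K) → K} :
    f ∈ mvPolynomialFunctions ι K ↔ ∃ P : MvPolynomial ι K, ∀ v, f v = eval v P := by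
  simp [mvPolynomialFunctions, funext_iff, eq_comm]

theorem apply_mem_mvPolynomialFunctions (i : ι) :
    (fun v : ι → K => v i) ∈ mvPolynomialFunctions ι K :=
  mem_mvPolynomialFunctions.mpr ⟨X i, fun _ => (eval_X ..).symm⟩

theorem const_mem_mvPolynomialFunctions (c : K) :
    (fun _ : ι → K => c) ∈ mvPolynomialFunctions ι K :=
  (mvPolynomialFunctions ι K).algebraMap_mem c

theorem comp_mem_mvPolynomialFunctions {f : (σ → K) → K} (hf : f ∈ mvPolynomialFunctions σ K)
    {g : (ι → K) → σ → K} (hg : ∀ j, (fun v => g v j) ∈ mvPolynomialFunctions ι K) :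
    f ∘ g ∈ mvPolynomialFunctions ι K := by
  obtain ⟨P, hP⟩ := mem_mvPolynomialFunctions.mp hf
  choose Q hQ using fun j => mem_mvPolynomialFunctions.mp (hg j)
  refine mem_mvPolynomialFunctions.mpr ⟨bind₁ Q P, fun v => ?_⟩
  change _ = eval₂Hom _ v _
  rw [eval₂Hom_bind₁, Function.comp_apply, hP]
  exact congrArg (eval · P) (funext fun j => hQ j v)

theorem comp_add_const_mem_mvPolynomialFunctions {f : (ι → K) → K}
    (hf : f ∈ mvPolynomialFunctions ι K) (w : ι → K) :
    (fun v => f (v + w)) ∈ mvPolynomialFunctions ι K :=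
  comp_mem_mvPolynomialFunctions hf fun j =>
    add_mem (apply_mem_mvPolynomialFunctions j) (const_mem_mvPolynomialFunctions (w j))

theorem linearCombination_mem_mvPolynomialFunctions [Fintype ι] (b : ι → σ → K) (j : σ) :
    (fun c : ι → K => (∑ i, c i • b i) j) ∈ mvPolynomialFunctions ι K := by
  have hsum : (fun c : ι → K => (∑ i, c i • b i) j) =
      ∑ i, (fun c : ι → K => c i) * fun _ => b i j := by
    ext c
    simp [Finset.sum_apply]
  rw [hsum]
  exact sum_mem fun i _ =>
    mul_mem (apply_mem_mvPolynomialFunctions i) (const_mem_mvPolynomialFunctions _)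

end PolynomialFunctions

theorem eq_zero_of_forall_mem_eq_zero_of_span_eq_top {ι K : Type*} [Field K] [CharZero K]
    [Fintype ι] [Nonempty ι] {f : (ι → K) → K} (hf : f ∈ mvPolynomialFunctions ι K)
    (T : AddSubsemigroup (ι → K)) (hT : Submodule.span K (T : Set (ι → K)) = ⊤)
    (hfT : ∀ v ∈ T, f v = 0) : f = 0 := by
  obtain ⟨b, hbT⟩ := (Pi.basisFun K ι).exists_basis_mem_of_span_eq_top hT
  obtain ⟨Q, hQ⟩ := mem_mvPolynomialFunctions.mp <|
    comp_mem_mvPolynomialFunctions hf (linearCombination_mem_mvPolynomialFunctions (⇑b))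
  -- `Q` vanishes at all points with positive integer coordinates: `b` maps them into `T`.
  have hQ0 : Q = 0 := by
    refine MvPolynomial.funext_set (fun _ => Set.range fun m : ℕ => ((m + 1 : ℕ) : K))
      (fun _ => Set.infinite_range_of_injective (Nat.cast_injective.comp Nat.succ_injective))
      fun c hc => ?_
    simp only [Set.mem_pi, Set.mem_univ, true_implies, Set.mem_range] at hc
    choose m hm using hc
    rw [← hQ, map_zero]
    refine hfT _ ?_
    simp only [← hm, Nat.cast_smul_eq_nsmul]
    exact T.sum_nsmul_mem Finset.univ_nonempty (fun i _ => hbT i) fun i _ => (m i).succ_ne_zero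
  funext v
  rw [← b.sum_repr v]
  exact (hQ _).trans (by rw [hQ0, map_zero, Pi.zero_apply])

namespace PowerSeries

theorem coeff_pow_eq_zero_of_lt {R : Type*} [CommSemiring R] {f : R⟦X⟧}
    (hf : constantCoeff f = 0) {n k : ℕ} (h : n < k) : coeff n (f ^ k) = 0 :=
  X_pow_dvd_iff.mp (pow_dvd_pow_of_dvd (X_dvd_iff.mpr hf) k) n h

theorem exists_derivative_eq {K : Type*} [Field K] [CharZero K] (q : K⟦X⟧) :
    ∃ p : K⟦X⟧, constantCoeff p = 0 ∧ d⁄dX K p = q := by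
  refine ⟨mk fun n => if n = 0 then 0 else coeff (n - 1) q / n, by simp, ?_⟩
  ext n
  rw [coeff_derivative, coeff_mk, if_neg n.succ_ne_zero, Nat.add_sub_cancel, Nat.cast_succ,
    div_mul_cancel₀ _ (Nat.cast_add_one_ne_zero n)]

theorem eq_of_derivative_eq_mul_self {K : Type*} [Field K] [CharZero K] {a u v : K⟦X⟧}
    (hu : d⁄dX K u = a * u) (hv : d⁄dX K v = a * v)
    (hc : constantCoeff u = constantCoeff v) (hv0 : constantCoeff v ≠ 0) : u = v := by
  have hvv : v * v⁻¹ = 1 := PowerSeries.mul_inv_cancel v hv0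
  have hquot : u * v⁻¹ = 1 := by
    refine derivative.ext ?_ ?_
    · rw [derivative_one, Derivation.leibniz, derivative_inv', hu, hv, smul_eq_mul, smul_eq_mul]
      linear_combination (-(a * u * v⁻¹)) * hvv
    · rw [map_mul, constantCoeff_inv, hc, mul_inv_cancel₀ hv0, map_one]
  calc u = u * v⁻¹ * v := by rw [mul_assoc, mul_comm v⁻¹, hvv, mul_one]
    _ = v := by rw [hquot, one_mul]

end PowerSeries

section Exponential

variable {f g : ℚ⟦X⟧}

theorem constantCoeff_expPS (f : ℚ⟦X⟧) : constantCoeff (expPS f) = 1 := by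
  rw [← coeff_zero_eq_constantCoeff_apply, expPS, coeff_mk]
  simp

theorem expPS_eq_subst_exp (hf : constantCoeff f = 0) : expPS f = (exp ℚ).subst f := by
  ext n
  rw [expPS, coeff_mk, coeff_subst' (HasSubst.of_constantCoeff_zero' hf), map_sum,
    finsum_eq_sum_of_support_subset (s := Finset.range (n + 1))]
  · simp [coeff_exp, map_smul]
  · intro k hk
    by_contra hkn
    simp only [Finset.coe_range, Set.mem_Iio, not_lt] at hkn
    exact hk (by simp only [coeff_pow_eq_zero_of_lt hf (Nat.lt_of_succ_le hkn), smul_zero])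

theorem derivative_expPS (hf : constantCoeff f = 0) :
    d⁄dX ℚ (expPS f) = d⁄dX ℚ f * expPS f := by
  rw [expPS_eq_subst_exp hf, derivative_subst (HasSubst.of_constantCoeff_zero' hf),
    derivative_exp, mul_comm]

theorem expPS_add (hf : constantCoeff f = 0) (hg : constantCoeff g = 0) :
    expPS (f + g) = expPS f * expPS g := by
  have hfg : constantCoeff (f + g) = 0 := by rw [map_add, hf, hg, add_zero]
  refine eq_of_derivative_eq_mul_self (a := d⁄dX ℚ (f + g)) (derivative_expPS hfg) ?_ ?_ ?_
  · rw [Derivation.leibniz, derivative_expPS hf, derivative_expPS hg, map_add, smul_eq_mul,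
      smul_eq_mul]
    ring
  · rw [map_mul, constantCoeff_expPS, constantCoeff_expPS, constantCoeff_expPS, mul_one]
  · rw [map_mul, constantCoeff_expPS, constantCoeff_expPS, mul_one]
    exact one_ne_zero

theorem eq_of_expPS_eq (hf : constantCoeff f = 0) (hg : constantCoeff g = 0)
    (h : expPS f = expPS g) : f = g := by
  refine derivative.ext ?_ (hf.trans hg.symm)
  have hE : expPS f ≠ 0 := fun h0 => by simpa [h0] using constantCoeff_expPS f
  have := derivative_expPS hf
  rw [h, derivative_expPS hg, ← h] at this
  exact (mul_right_cancel₀ hE this).symm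

theorem exists_expPS_eq {h : ℚ⟦X⟧} (hh : constantCoeff h = 1) :
    ∃ f, constantCoeff f = 0 ∧ expPS f = h := by
  have hh0 : constantCoeff h ≠ 0 := hh ▸ one_ne_zero
  obtain ⟨f, hf, hderiv⟩ := exists_derivative_eq (h⁻¹ * d⁄dX ℚ h)
  refine ⟨f, hf, eq_of_derivative_eq_mul_self (derivative_expPS hf) ?_ ?_ hh0⟩
  · rw [hderiv, mul_comm h⁻¹, mul_assoc, PowerSeries.inv_mul_cancel h hh0, mul_one]
  · rw [constantCoeff_expPS, hh]

end Exponential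

theorem map_add_eq_mul_of_addSubsemigroup {ι K : Type*} [Field K] [CharZero K] [Fintype ι]
    [Nonempty ι] {φ : (ι → K) → K⟦X⟧}
    (hφ : ∀ n, (fun v => coeff n (φ v)) ∈ mvPolynomialFunctions ι K)
    (T : AddSubsemigroup (ι → K)) (hT : Submodule.span K (T : Set (ι → K)) = ⊤)
    (hmul : ∀ v ∈ T, ∀ w ∈ T, φ (v + w) = φ v * φ w) (v w : ι → K) :
    φ (v + w) = φ v * φ w := by
  have extend : ∀ w, (∀ v ∈ T, φ (v + w) = φ v * φ w) → ∀ v, φ (v + w) = φ v * φ w := by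
    intro w hw v
    ext n
    have hdiff : (fun v => coeff n (φ (v + w)) - coeff n (φ v * φ w)) =
        (fun v => coeff n (φ (v + w))) - ∑ p ∈ Finset.HasAntidiagonal.antidiagonal n,
          (fun v => coeff p.1 (φ v)) * fun _ => coeff p.2 (φ w) := by
      ext v
      simp [coeff_mul, Finset.sum_apply]
    have hmem : (fun v => coeff n (φ (v + w)) - coeff n (φ v * φ w)) ∈
        mvPolynomialFunctions ι K := by
      rw [hdiff]
      exact sub_mem (comp_add_const_mem_mvPolynomialFunctions (hφ n) w) <|
        sum_mem fun p _ => mul_mem (hφ p.1) (const_mem_mvPolynomialFunctions _)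
    have := eq_zero_of_forall_mem_eq_zero_of_span_eq_top hmem T hT
      fun v hv => by rw [hw v hv, sub_self]
    exact sub_eq_zero.mp (congrFun this v)
  refine extend w (fun u hu => ?_) v
  rw [add_comm, mul_comm]
  exact extend u (fun v hv => hmul v hv u hu) w

/-- If `φ : ℚ⁴ → ℚ[[x]]` has constant term `1`, is multiplicative (`φ(v+w) = φ(v)·φ(w)`)
on an additively closed subset spanning `ℚ⁴`, and its `x^δ`-coefficient is a polynomial
of degree `≤ δ` in `v`, then `φ(v) = exp(v₁A₁ + v₂A₂ + v₃A₃ + v₄A₄)` for universal power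
series `A₁, …, A₄`. -/
theorem multiplicative_generating_function_is_exponential
    (φ : (Fin 4 → ℚ) → PowerSeries ℚ) (S : Set (Fin 4 → ℚ))
    (hconst : ∀ v, PowerSeries.constantCoeff (φ v) = 1)
    (hSadd : ∀ v ∈ S, ∀ w ∈ S, v + w ∈ S)
    (hSspan : Submodule.span ℚ S = ⊤)
    (hmul : ∀ v ∈ S, ∀ w ∈ S, φ (v + w) = φ v * φ w)
    (hpoly : ∀ δ : ℕ, ∃ P : MvPolynomial (Fin 4) ℚ, P.totalDegree ≤ δ ∧
      ∀ v, PowerSeries.coeff δ (φ v) = MvPolynomial.eval v P) :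
    ∃ A : Fin 4 → PowerSeries ℚ,
      (∀ i, PowerSeries.constantCoeff (A i) = 0) ∧
      ∀ v, φ v = expPS (∑ i, v i • A i) := by
  have hcoeff : ∀ n, (fun v => coeff n (φ v)) ∈ mvPolynomialFunctions (Fin 4) ℚ := fun n =>
    let ⟨P, _, hP⟩ := hpoly n
    mem_mvPolynomialFunctions.mpr ⟨P, hP⟩
  have hφmul := map_add_eq_mul_of_addSubsemigroup hcoeff
    ⟨S, fun {v w} hv hw => hSadd v hv w hw⟩ hSspan hmul
  choose ψ hψ0 hψ using fun v => exists_expPS_eq (hconst v)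
  have hψadd : ∀ v w, ψ (v + w) = ψ v + ψ w := fun v w =>
    eq_of_expPS_eq (hψ0 _) (by rw [map_add, hψ0, hψ0, add_zero]) <| by
      rw [expPS_add (hψ0 v) (hψ0 w), hψ, hψ, hψ, hφmul]
  refine ⟨fun i => ψ fun j => if i = j then 1 else 0, fun i => hψ0 _, fun v => ?_⟩
  rw [← hψ v]
  exact congrArg expPS ((AddMonoidHom.mk' ψ hψadd).toRatLinearMap.pi_apply_eq_sum_univ v)
end
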